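/- arXiv:1608.02342 — 5 statements merged into one kernel-verified Lean document; each statement's English description precedes it below -/
import Mathlib

section
/- For an odd prime p, an element a of ℚ_p lies in ℤ_p if and only if there exists y ∈ ℚ_p with y² = 1 + p·a². -/
/-!
If `a` is integral, then `1 + p a² ≡ 1 (mod p)`; as `2` is a unit for odd `p`, Hensel's lemma
lifts the root `1` of `X² - (1 + p a²)` modulo `p` to a square root in `ℤ_p`.
If `a` is not integral, then `v(p a²) = 1 + 2 v(a) < 0 = v(1)`, so `1 + p a²` has odd valuation
and cannot be a square.
-/

open Polynomial

namespace PadicInt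

variable {p : ℕ} [Fact p.Prime]

theorem norm_two_eq_one (hp : p ≠ 2) : ‖(2 : ℤ_[p])‖ = 1 := by
  rw [← Nat.cast_ofNat, norm_natCast_eq_one_iff]
  exact (Nat.coprime_primes Fact.out Nat.prime_two).mpr hp

theorem exists_sq_eq_of_norm_sub_one_lt (hp : p ≠ 2) {u : ℤ_[p]} (hu : ‖u - 1‖ < 1) :
    ∃ z : ℤ_[p], z ^ 2 = u := by
  have hnorm : ‖(X ^ 2 - C u).aeval (1 : ℤ_[p])‖ <
      ‖(X ^ 2 - C u).derivative.aeval (1 : ℤ_[p])‖ ^ 2 := by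
    simpa [norm_sub_rev, one_add_one_eq_two, norm_two_eq_one hp] using hu
  obtain ⟨z, hz, -⟩ := hensels_lemma hnorm
  exact ⟨z, by simpa [sub_eq_zero] using hz⟩

theorem norm_one_add_p_mul_sub_one_lt (b : ℤ_[p]) : ‖1 + p * b - 1‖ < 1 := by
  rw [add_sub_cancel_left, norm_mul, norm_p]
  exact mul_lt_one_of_nonneg_of_lt_one_left (by positivity)
    (inv_lt_one_of_one_lt₀ (mod_cast (Fact.out : p.Prime).one_lt)) (norm_le_one b)

end PadicInt

namespace Padic

variable {p : ℕ} [Fact p.Prime]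

theorem valuation_add_eq_of_lt {x y : ℚ_[p]} (hx : x ≠ 0) (h : x.valuation < y.valuation) :
    (x + y).valuation = x.valuation := by
  rcases eq_or_ne y 0 with rfl | hy
  · rw [add_zero]
  have hlt : addValuation x < addValuation y := by
    simpa [addValuation.apply hx, addValuation.apply hy] using h
  have hsum := AddValuation.map_add_eq_of_lt_left _ hlt
  rw [addValuation.apply hx] at hsum
  have hxy : x + y ≠ 0 := by
    rintro h0
    rw [h0, _root_.AddValuation.map_zero] at hsum
    exact WithTop.top_ne_coe hsum
  rwa [addValuation.apply hxy, WithTop.coe_inj] at hsum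

theorem norm_le_one_of_sq_eq_one_add_p_mul_sq {a y : ℚ_[p]} (h : y ^ 2 = 1 + p * a ^ 2) :
    ‖a‖ ≤ 1 := by
  rw [norm_le_one_iff_val_nonneg]
  by_contra! ha
  have ha0 : a ≠ 0 := by rintro rfl; simp at ha
  have hp0 : (p : ℚ_[p]) ≠ 0 := mod_cast (Fact.out : p.Prime).ne_zero
  have hpa : ((p : ℚ_[p]) * a ^ 2).valuation = 1 + 2 * a.valuation := by
    rw [valuation_mul hp0 (pow_ne_zero 2 ha0), valuation_p, valuation_pow, Nat.cast_ofNat]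
  have hsum : (1 + p * a ^ 2 : ℚ_[p]).valuation = 1 + 2 * a.valuation := by
    rw [add_comm, valuation_add_eq_of_lt (mul_ne_zero hp0 (pow_ne_zero 2 ha0))
      (by rw [hpa, valuation_one]; omega), hpa]
  have hy : (y ^ 2).valuation = 2 * y.valuation := by
    rw [valuation_pow, Nat.cast_ofNat]
  rw [h, hsum] at hy
  omega

end Padic

/-- Julia Robinson: for an odd prime `p`, `a ∈ ℤ_p` iff `∃ y, y² = 1 + p·a²`. -/
theorem robinson_odd_prime (p : ℕ) [Fact p.Prime] (hp : p ≠ 2) (a : ℚ_[p]) :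
    (∃ b : ℤ_[p], (b : ℚ_[p]) = a) ↔ ∃ y : ℚ_[p], y ^ 2 = 1 + (p : ℚ_[p]) * a ^ 2 := by
  constructor
  · rintro ⟨b, rfl⟩
    obtain ⟨z, hz⟩ :=
      PadicInt.exists_sq_eq_of_norm_sub_one_lt hp (PadicInt.norm_one_add_p_mul_sub_one_lt (b ^ 2))
    exact ⟨z, mod_cast congrArg ((↑) : ℤ_[p] → ℚ_[p]) hz⟩
  · rintro ⟨y, hy⟩
    exact ⟨⟨a, Padic.norm_le_one_of_sq_eq_one_add_p_mul_sq hy⟩, rfl⟩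
end

section
/- An element a of ℚ₂ lies in ℤ₂ if and only if there exists y ∈ ℚ₂ with y² = 1 + 8·a². -/
/-!
If `a ∈ ℤ₂` then `1 + 8a² ≡ 1 mod 8`, and Hensel's lemma applied to `X² - (1 + 8a²)` at `1`
(where `‖F(1)‖ ≤ 1/8 < 1/4 = ‖F'(1)‖²`) gives a square root.

Conversely, if `‖a‖ > 1` and `y² = 1 + 8a²`, then `u = (y - 1)/(2a)` satisfies
`u (u + a⁻¹) = (y² - 1)/(4a²) = 2` with `‖a⁻¹‖ < 1`. This is impossible: if `‖u‖ < 1` both factors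
lie in `2ℤ₂` and the product has norm at most `1/4`, and otherwise both factors have norm `‖u‖ ≥ 1`.
-/

namespace Padic

variable {p : ℕ} [Fact p.Prime]

lemma norm_le_inv_of_norm_lt_one {x : ℚ_[p]} (hx : ‖x‖ < 1) : ‖x‖ ≤ (p : ℝ)⁻¹ := by
  simpa using (norm_lt_pow_iff_norm_le_pow_sub_one x 0).1 (by simpa using hx)

lemma norm_mul_add_ne_norm_p (u e : ℚ_[p]) (he : ‖e‖ < 1) :
    ‖u * (u + e)‖ ≠ ‖(p : ℚ_[p])‖ := by
  have hp1 : (1 : ℝ) < p := mod_cast (Fact.out : p.Prime).one_lt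
  have hp : (p : ℝ)⁻¹ < 1 := inv_lt_one_of_one_lt₀ hp1
  have hp0 : 0 < (p : ℝ)⁻¹ := inv_pos.2 (by linarith)
  rw [norm_p, norm_mul]
  by_cases hu : ‖u‖ < 1
  · have hue : ‖u + e‖ < 1 := (nonarchimedean u e).trans_lt (max_lt hu he)
    apply ne_of_lt
    calc ‖u‖ * ‖u + e‖ ≤ (p : ℝ)⁻¹ * (p : ℝ)⁻¹ :=
          mul_le_mul (norm_le_inv_of_norm_lt_one hu) (norm_le_inv_of_norm_lt_one hue)
            (norm_nonneg _) hp0.le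
      _ < (p : ℝ)⁻¹ := mul_lt_of_lt_one_left hp0 hp
  · push Not at hu
    have hue : ‖u + e‖ = ‖u‖ := by
      rw [add_eq_max_of_ne (he.trans_le hu).ne', max_eq_left (he.trans_le hu).le]
    rw [hue]
    nlinarith

lemma norm_le_one_of_sq_eq_one_add_eight_mul_sq {a y : ℚ_[2]} (hy : y ^ 2 = 1 + 8 * a ^ 2) :
    ‖a‖ ≤ 1 := by
  by_contra! ha
  have ha0 : a ≠ 0 := by rintro rfl; norm_num at ha
  have he : ‖a⁻¹‖ < 1 := by rw [norm_inv]; exact inv_lt_one_of_one_lt₀ ha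
  have hu : (y - 1) / (2 * a) * ((y - 1) / (2 * a) + a⁻¹) = (2 : ℕ) := by
    field_simp
    push_cast
    linear_combination hy
  exact norm_mul_add_ne_norm_p _ _ he (by rw [hu])

end Padic

namespace PadicInt

lemma exists_sq_eq_one_add {p : ℕ} [Fact p.Prime] {c : ℤ_[p]} (hc : ‖c‖ < ‖(2 : ℤ_[p])‖ ^ 2) :
    ∃ z : ℤ_[p], z ^ 2 = 1 + c := by
  let F : Polynomial ℤ_[p] := .X ^ 2 - .C (1 + c)
  have hF : ‖F.aeval (1 : ℤ_[p])‖ < ‖F.derivative.aeval (1 : ℤ_[p])‖ ^ 2 := by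
    simpa [F, one_add_one_eq_two] using hc
  obtain ⟨z, hz, -⟩ := hensels_lemma hF
  exact ⟨z, by simpa [F, sub_eq_zero] using hz⟩

lemma exists_sq_eq_one_add_eight_mul_sq (b : ℤ_[2]) : ∃ z : ℤ_[2], z ^ 2 = 1 + 8 * b ^ 2 := by
  have h2 : ‖(2 : ℤ_[2])‖ = 1 / 2 := by simpa using norm_p (p := 2)
  apply exists_sq_eq_one_add
  rw [norm_mul, norm_pow, show (8 : ℤ_[2]) = 2 ^ 3 by norm_num, norm_pow, h2]
  nlinarith [b.norm_le_one, norm_nonneg b]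

end PadicInt

/-- Julia Robinson's definition for `p = 2`: `a ∈ ℤ₂` iff `∃ y, y² = 1 + 8·a²`. -/
theorem robinson_two (a : ℚ_[2]) :
    (∃ b : ℤ_[2], (b : ℚ_[2]) = a) ↔ ∃ y : ℚ_[2], y ^ 2 = 1 + 8 * a ^ 2 := by
  constructor
  · rintro ⟨b, rfl⟩
    obtain ⟨z, hz⟩ := PadicInt.exists_sq_eq_one_add_eight_mul_sq b
    exact ⟨z, by exact_mod_cast congrArg ((↑) : ℤ_[2] → ℚ_[2]) hz⟩
  · rintro ⟨y, hy⟩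
    exact ⟨⟨a, Padic.norm_le_one_of_sq_eq_one_add_eight_mul_sq hy⟩, rfl⟩
end

section
/- Let F be a field and m > 1 an integer with char(F) ∤ m. For a ∈ F((t)), if there exists y ∈ F((t)) with yᵐ = 1 + t·aᵐ, then a lies in F[[t]]. -/
open LaurentSeries
open scoped WithZero

namespace WithZero

theorem dvd_of_pow_eq_exp {x : ℤᵐ⁰} {m : ℕ} {s : ℤ} (h : x ^ m = exp s) : (m : ℤ) ∣ s := by
  rcases eq_or_ne x 0 with rfl | hx
  · rcases m with _ | m
    · rw [pow_zero, eq_comm, exp_eq_one] at h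
      simp [h]
    · exact absurd h.symm (by simp)
  · lift x to ℤ using hx
    rw [← exp_nsmul, exp_inj] at h
    exact ⟨x, by rw [← h, nsmul_eq_mul]⟩

end WithZero

open WithZero

/-- If `v a = exp n` with `n > 0`, then `w aᵐ` dominates `1`, and its valuation `exp (r + m n)`
is not an `m`-th power. -/
theorem Valuation.le_one_of_pow_eq_one_add_mul_pow {R : Type*} [Ring R] (v : Valuation R ℤᵐ⁰)
    {w a y : R} {m : ℕ} {r : ℤ} (hw : v w = exp r) (hr : -(m : ℤ) < r) (hmr : ¬ (m : ℤ) ∣ r)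
    (hy : y ^ m = 1 + w * a ^ m) : v a ≤ 1 := by
  by_contra! hva
  lift v a to ℤ using (zero_lt_one.trans hva).ne' with n hn
  have hn_pos : 0 < n := by rwa [← exp_zero, exp_lt_exp] at hva
  have hdom : v 1 < v (w * a ^ m) := by
    rw [map_mul, map_pow, hw, ← hn, ← exp_nsmul, ← exp_add, map_one, ← exp_zero, exp_lt_exp,
      nsmul_eq_mul]
    nlinarith
  have hvy : v y ^ m = exp (r + m • n) := by
    rw [← map_pow, hy, Valuation.map_add_eq_of_lt_right _ hdom, map_mul, map_pow, hw, ← hn,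
      exp_add, exp_nsmul]
  have := dvd_of_pow_eq_exp hvy
  rw [nsmul_eq_mul, dvd_add_left (dvd_mul_right _ _)] at this
  exact hmr this

theorem ax_laurent_series_general (F : Type*) [Field F] (m : ℕ) (hm : 1 < m)
    (a : LaurentSeries F)
    (h : ∃ y : LaurentSeries F, y ^ m = 1 + ((PowerSeries.X : PowerSeries F) : LaurentSeries F) * a ^ m) :
    ∃ b : PowerSeries F, (b : LaurentSeries F) = a := by
  obtain ⟨y, hy⟩ := h
  have hvX : Valued.v ((PowerSeries.X : PowerSeries F) : LaurentSeries F) = exp (-1) := by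
    simpa using valuation_X_pow F 1
  have hm_ndvd : ¬ (m : ℤ) ∣ -1 := by
    rw [Int.dvd_neg, ← Int.natCast_one, Int.natCast_dvd_natCast, Nat.dvd_one]
    omega
  exact (val_le_one_iff_eq_coe F a).mp
    (Valued.v.le_one_of_pow_eq_one_add_mul_pow hvX (by omega) hm_ndvd hy)

/-- Ax's key implication: if `1 + t·aᵐ` is an `m`-th power in `F((t))`
(with `m > 1` and `char F ∤ m`), then `a ∈ F[[t]]`. -/
theorem ax_laurent_series (F : Type*) [Field F] (m : ℕ) (hm : 1 < m)
    (hchar : ¬ (ringChar F ∣ m)) (a : LaurentSeries F)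
    (h : ∃ y : LaurentSeries F, y ^ m = 1 + ((PowerSeries.X : PowerSeries F) : LaurentSeries F) * a ^ m) :
    ∃ b : PowerSeries F, (b : LaurentSeries F) = a :=
  ax_laurent_series_general F m hm a h
end

section
/- Let (K, v) be a henselian valued field of residue characteristic not dividing m, where m > 1 and K contains a primitive m-th root of unity. If w ∈ K satisfies v(w) = 0 and the residue of w is not an m-th power in the residue field, then for a ∈ K: if 1 + w·aᵐ is an m-th power in K, then v(a) ≥ 0. -/
/-!
If `v a > 1` and `y ^ m = 1 + w * a ^ m`, then `t = y / a` satisfies `t ^ m - w = (a⁻¹) ^ m`, which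
lies in the maximal ideal. Hence `t` is integral and its residue is an `m`-th root of the residue
of `w`.
-/

theorem div_pow_sub_eq_inv_pow {K : Type*} [Field K] {m : ℕ} {a w y : K} (ha : a ≠ 0)
    (hy : y ^ m = 1 + w * a ^ m) : (y / a) ^ m - w = a⁻¹ ^ m := by
  rw [div_pow, hy, inv_pow]
  field_simp
  ring

namespace Valuation

variable {K : Type*} [Field K] {Γ : Type*} [LinearOrderedCommGroupWithZero Γ] (v : Valuation K Γ)

theorem residue_eq_of_sub_lt_one {x y : v.valuationSubring} (h : v ((x : K) - y) < 1) :
    IsLocalRing.residue v.valuationSubring x = IsLocalRing.residue v.valuationSubring y := by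
  rw [← sub_eq_zero, ← _root_.map_sub, IsLocalRing.residue_eq_zero_iff,
    ValuationSubring.valuation_lt_one_iff,
    ← v.isEquiv_valuation_valuationSubring.lt_one_iff_lt_one]
  exact h

theorem exists_pow_eq_residue_of_pow_sub_lt_one {m : ℕ} (hm : m ≠ 0) {w : K} (hw : v w = 1)
    {t : K} (ht : v (t ^ m - w) < 1) :
    ∃ r : IsLocalRing.ResidueField v.valuationSubring,
      r ^ m = IsLocalRing.residue v.valuationSubring
        ⟨w, (Valuation.mem_valuationSubring_iff v w).mpr hw.le⟩ := by
  have htm : v (t ^ m) = 1 := hw ▸ v.map_eq_of_sub_lt (hw ▸ ht)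
  have hvt : v t ≤ 1 := by
    rw [← pow_le_one_iff_of_nonneg zero_le hm, ← map_pow, htm]
  refine ⟨IsLocalRing.residue v.valuationSubring ⟨t, hvt⟩, ?_⟩
  rw [← map_pow]
  exact v.residue_eq_of_sub_lt_one ht

end Valuation

theorem henselian_nonpower_residue_general {K : Type*} [Field K] {Γ : Type*}
    [LinearOrderedCommGroupWithZero Γ] (v : Valuation K Γ)
    (m : ℕ) (hm : 1 < m)
    (w : K) (hw : v w = 1)
    (hres : ¬ ∃ r : IsLocalRing.ResidueField v.valuationSubring,
      r ^ m = IsLocalRing.residue v.valuationSubring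
        ⟨w, (Valuation.mem_valuationSubring_iff v w).mpr hw.le⟩)
    (a : K) (h : ∃ y : K, y ^ m = 1 + w * a ^ m) :
    v a ≤ 1 := by
  by_contra! hva
  obtain ⟨y, hy⟩ := h
  have ha : a ≠ 0 := by rintro rfl; simp at hva
  refine hres (v.exists_pow_eq_residue_of_pow_sub_lt_one (by omega) hw (t := y / a) ?_)
  rw [div_pow_sub_eq_inv_pow ha hy, map_pow, map_inv₀]
  exact pow_lt_one₀ zero_le (inv_lt_one_of_one_lt₀ hva) (by omega)

/-- If `w` is a unit of the valuation ring whose residue is not an `m`-th power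
in the residue field (with a primitive `m`-th root of unity in `K` and residue
characteristic prime to `m`), then `1 + w·aᵐ` being an `m`-th power forces `v(a) ≥ 0`. -/
theorem henselian_nonpower_residue {K : Type*} [Field K] {Γ : Type*}
    [LinearOrderedCommGroupWithZero Γ] (v : Valuation K Γ)
    [HenselianLocalRing v.valuationSubring]
    (m : ℕ) (hm : 1 < m)
    (hchar : ¬ (ringChar (IsLocalRing.ResidueField v.valuationSubring) ∣ m))
    (ζ : K) (hζ : IsPrimitiveRoot ζ m)
    (w : K) (hw : v w = 1)
    (hres : ¬ ∃ r : IsLocalRing.ResidueField v.valuationSubring,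
      r ^ m = IsLocalRing.residue v.valuationSubring
        ⟨w, (Valuation.mem_valuationSubring_iff v w).mpr hw.le⟩)
    (a : K) (h : ∃ y : K, y ^ m = 1 + w * a ^ m) :
    v a ≤ 1 :=
  henselian_nonpower_residue_general v m hm w hw hres a h
end

section
/- Let K be a field and let v, w be valuations on K whose valuation rings are comparable, with 𝒪_v ⊆ 𝒪_w. If v is henselian, then w is henselian. -/
/-!
Let `f` be a polynomial over `𝒪_w` with `f(a₀) = c ∈ 𝔪_w` and `f'(a₀) = u` a unit. Substituting
`X = a₀ + (c/u) Y` gives `f = c · g` with `g ≡ 1 + Y` modulo `c 𝒪_w ⊆ 𝔪_w ⊆ 𝔪_v`, so `g` has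
coefficients in `𝒪_v` and reduces to `1 + Y` there. The reversal of `g` is monic with the simple
residual root `-1`, so Hensel's lemma in `𝒪_v` gives a root `b` of it, and `1/b` is a root of `g`.
-/

open Polynomial IsLocalRing

theorem HenselianLocalRing.exists_isRoot_one_add_X_add_X_sq_mul {R : Type*} [CommRing R]
    [HenselianLocalRing R] (p : R[X]) (hp : ∀ n, p.coeff n ∈ maximalIdeal R) :
    ∃ y : R, (1 + X + X ^ 2 * p).IsRoot y := by
  set g : R[X] := 1 + X + X ^ 2 * p
  set n := p.natDegree
  have hg_natDegree : g.natDegree ≤ n + 2 := by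
    show (1 + X + X ^ 2 * p).natDegree ≤ p.natDegree + 2
    compute_degree
    omega
  have hg_residue : g.map (residue R) = 1 + X := by
    have : p.map (residue R) = 0 := by
      ext i; simpa [residue_eq_zero_iff] using hp i
    simp [g, Polynomial.map_add, this]
  have hF_residue : (g.reflect (n + 2)).map (residue R) = X ^ (n + 2) + X ^ (n + 1) := by
    have hX := reflect_monomial (R := ResidueField R) (n + 2) 1
    rw [pow_one] at hX
    rw [← reflect_map, hg_residue, reflect_add, reflect_one, hX, revAt_le (by omega)]
    rfl
  have hF_monic : (g.reflect (n + 2)).Monic :=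
    monic_of_natDegree_le_of_coeff_eq_one _
      (natDegree_reflect_le.trans (max_le le_rfl hg_natDegree)) (by simp [coeff_reflect, g])
  have hF_derivative : eval (-1) (derivative (X ^ (n + 2) + X ^ (n + 1) : (ResidueField R)[X]))
      = -(-1) ^ n := by
    simp only [derivative_add, derivative_X_pow, eval_add, eval_mul, eval_C, eval_pow, eval_X]
    push_cast
    ring
  have hensel := ((HenselianLocalRing.TFAE R).out 0 1).mp ‹_›
  obtain ⟨b, hb, hb_residue⟩ := hensel (g.reflect (n + 2)) hF_monic (-1)
      (by simp [aeval_def, eval₂_eq_eval_map, hF_residue, pow_succ])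
      (by
        rw [aeval_def, eval₂_eq_eval_map, ResidueField.algebraMap_eq, ← derivative_map,
          hF_residue, hF_derivative]
        simp)
  have hb_unit : IsUnit b := (residue_ne_zero_iff_isUnit b).mp (by simp [hb_residue])
  let := hb_unit.invertible
  refine ⟨⅟b, ?_⟩
  simpa [IsRoot, eval₂_id, hb.eq_zero] using
    (eval₂_reflect_eq_zero_iff (RingHom.id R) (⅟b) (n + 2) g hg_natDegree).mp

theorem Polynomial.exists_eval_add_eval_mul_inv_mul_eq {R : Type*} [CommRing R] (f : R[X])
    (a : R) (u : Rˣ) (hu : f.derivative.eval a = u) :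
    ∃ h : R[X], ∀ y, f.eval (a + f.eval a * ↑u⁻¹ * y) =
      f.eval a * (1 + y + y ^ 2 * (f.eval a * h.eval y)) := by
  set q := taylor a f
  set r := q.divX.divX
  have hq : ∀ s, q.eval s = q.coeff 0 + q.coeff 1 * s + s ^ 2 * r.eval s := by
    intro s
    conv_lhs => rw [← divX_mul_X_add q, ← divX_mul_X_add q.divX]
    simp only [eval_add, eval_mul, eval_X, eval_C, coeff_divX]
    ring
  refine ⟨C ((↑u⁻¹ : R) ^ 2) * r.comp (C (f.eval a * ↑u⁻¹) * X), fun y => ?_⟩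
  rw [add_comm a, ← taylor_eval, hq, taylor_coeff_zero, taylor_coeff_one, hu]
  simp only [eval_mul, eval_C, eval_comp, eval_X]
  linear_combination (f.eval a * y) * u.mul_inv

theorem ValuationSubring.exists_map_inclusion_eq_of_coeff_mem {K : Type*} [Field K]
    {A B : ValuationSubring K} (h : A ≤ B) (p : B[X]) (hp : ∀ n, p.coeff n ∈ maximalIdeal B) :
    ∃ q : A[X], q.map (A.inclusion B h) = p ∧ ∀ n, q.coeff n ∈ maximalIdeal A := by
  have hA : ∀ n, (p.coeff n : K) ∈ A.nonunits := fun n =>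
    nonunits_le_nonunits.mpr h (coe_mem_nonunits_iff.mpr (hp n))
  obtain ⟨q, hq⟩ := (mem_lifts (f := A.inclusion B h) p).mp
    ((lifts_iff_coeff_lifts p).mpr fun n => ⟨⟨_, nonunits_subset (hA n)⟩, rfl⟩)
  refine ⟨q, hq, fun n => coe_mem_nonunits_iff.mp ?_⟩
  have : (q.coeff n : K) = p.coeff n := by rw [← hq, coeff_map]; rfl
  exact this ▸ hA n

/-- A coarsening of a henselian valuation is henselian. -/
theorem coarsening_henselian {K : Type*} [Field K]
    (A B : ValuationSubring K) (h : A ≤ B) [HenselianLocalRing A] :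
    HenselianLocalRing B := by
  refine ⟨fun f _ a₀ hc hu => ?_⟩
  set c := f.eval a₀
  obtain ⟨g, hg⟩ := f.exists_eval_add_eval_mul_inv_mul_eq a₀ hu.unit rfl
  obtain ⟨p, hpB, hp⟩ :=
    ValuationSubring.exists_map_inclusion_eq_of_coeff_mem h (C c * g) fun n => by
      rw [coeff_C_mul]; exact Ideal.mul_mem_right _ _ hc
  obtain ⟨y, hy⟩ := HenselianLocalRing.exists_isRoot_one_add_X_add_X_sq_mul p hp
  set y' := A.inclusion B h y
  have hy' : 1 + y' + y' ^ 2 * (c * g.eval y') = 0 := by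
    simpa [hpB] using (hy.map (f := A.inclusion B h)).eq_zero
  refine ⟨a₀ + c * ↑hu.unit⁻¹ * y', ?_, ?_⟩
  · rw [IsRoot, hg, hy', mul_zero]
  · rw [add_sub_cancel_left, mul_assoc]
    exact Ideal.mul_mem_right _ _ hc
end
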